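/- arXiv:2309.01980 — 3 statements merged into one kernel-verified Lean document; each statement's English description precedes it below -/
import Mathlib

section
/- Let h : ℝ^m → ℝ ∪ {∞} be proper, lower semicontinuous, and prox-bounded. Let {μ_k} ⊂ (0, ∞) with μ_k ↓ 0, let {z^k} ⊆ dom h, and let {z̃^k} ⊂ ℝ^m be bounded, and assume limsup_{k→∞} ( μ_k·h(z^k) + ½‖z^k − z̃^k‖² ) ≤ 0. Then μ_k·h(z^k) → 0 and ‖z^k − z̃^k‖ → 0 as k → ∞. -/
open Filter Topology Bornology

noncomputable section

/-- Euclidean space `ℝ^d`. -/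
abbrev Euc (d : ℕ) := EuclideanSpace ℝ (Fin d)

namespace Paper

variable {n m : ℕ}

/-- The effective domain of an extended-real-valued function. -/
def edom (g : Euc m → EReal) : Set (Euc m) := {z | g z < ⊤}

/-- `g` maps into `ℝ ∪ {∞}` and is proper (its domain is nonempty). -/
def ProperFn (g : Euc m → EReal) : Prop := (∀ z, g z ≠ ⊥) ∧ ∃ z, g z < ⊤

/-- `z ↦ g z + ‖z‖²/(2μ)` is bounded below. -/
def ProxBoundedWith (g : Euc m → EReal) (μ : ℝ) : Prop :=
  ∃ b : ℝ, ∀ z, (b : EReal) ≤ g z + ((‖z‖ ^ 2 / (2 * μ) : ℝ) : EReal)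

/-- `g` is prox-bounded. -/
def ProxBounded (g : Euc m → EReal) : Prop := ∃ μ : ℝ, 0 < μ ∧ ProxBoundedWith g μ

/-- `0 < μ < μ_g`, where `μ_g` is the threshold of prox-boundedness of `g`. -/
def BelowThreshold (g : Euc m → EReal) (μ : ℝ) : Prop :=
  0 < μ ∧ ∃ μ' : ℝ, μ < μ' ∧ ProxBoundedWith g μ'

/-- The tangent cone to `Ω` at `wbar`. -/
def tangentCone {E : Type*} [NormedAddCommGroup E] [NormedSpace ℝ E]
    (Ω : Set E) (wbar : E) : Set E :=
  {v | ∃ (t : ℕ → ℝ) (w : ℕ → E), (∀ k, 0 < t k) ∧ Tendsto t atTop (𝓝 0) ∧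
        Tendsto w atTop (𝓝 v) ∧ ∀ k, wbar + t k • w k ∈ Ω}

/-- The regular (Fréchet) subdifferential of `g` at `zbar`. -/
def regSubdiff (g : Euc m → EReal) (zbar : Euc m) : Set (Euc m) :=
  {v | 0 ≤ liminf (fun z : Euc m =>
      (g z - g zbar - ((inner ℝ v (z - zbar) : ℝ) : EReal)) / ((‖z - zbar‖ : ℝ) : EReal))
      (𝓝[≠] zbar)}

/-- The limiting (Mordukhovich) subdifferential of `g` at `zbar`. -/
def limSubdiff (g : Euc m → EReal) (zbar : Euc m) : Set (Euc m) :=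
  {v | ∃ zs vs : ℕ → Euc m, Tendsto zs atTop (𝓝 zbar) ∧
        Tendsto (fun k => g (zs k)) atTop (𝓝 (g zbar)) ∧
        Tendsto vs atTop (𝓝 v) ∧ ∀ k, vs k ∈ regSubdiff g (zs k)}

/-- The subderivative `dg(zbar)(v)`. -/
def subderiv (g : Euc m → EReal) (zbar v : Euc m) : EReal :=
  liminf (fun p : ℝ × Euc m => (g (zbar + p.1 • p.2) - g zbar) / ((p.1 : ℝ) : EReal))
    ((𝓝[>] (0 : ℝ)) ×ˢ 𝓝 v)

/-- The second subderivative `d²g(zbar, ybar)(v)`. -/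
def secondSubderiv (g : Euc m → EReal) (zbar ybar v : Euc m) : EReal :=
  liminf (fun p : ℝ × Euc m =>
      (g (zbar + p.1 • p.2) - g zbar - ((p.1 * (inner ℝ ybar p.2 : ℝ) : ℝ) : EReal)) /
        ((p.1 ^ 2 / 2 : ℝ) : EReal))
    ((𝓝[>] (0 : ℝ)) ×ˢ 𝓝 v)

/-- The Lagrangian `L(·, y) = f + ⟨y, c ·⟩` of (P). -/
def LagFn (f : Euc n → ℝ) (c : Euc n → Euc m) (y : Euc m) : Euc n → ℝ :=
  fun x => f x + (inner ℝ y (c x) : ℝ)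

/-- `∇ₓL(xbar, y) = 0`. -/
def gradLagZero (f : Euc n → ℝ) (c : Euc n → Euc m) (xbar : Euc n) (y : Euc m) : Prop :=
  fderiv ℝ (LagFn f c y) xbar = 0

/-- The set `Λ(xbar)` of Lagrange multipliers of the M-stationarity system at `xbar`. -/
def Lambda (f : Euc n → ℝ) (c : Euc n → Euc m) (g : Euc m → EReal) (xbar : Euc n) :
    Set (Euc m) :=
  {y | gradLagZero f c xbar y ∧ y ∈ limSubdiff g (c xbar)}

/-- `∇²ₓₓL(xbar, y)[u, w]`. -/
def hessLag (f : Euc n → ℝ) (c : Euc n → Euc m) (xbar : Euc n) (y : Euc m) (u w : Euc n) : ℝ :=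
  iteratedFDeriv ℝ 2 (LagFn f c y) xbar ![u, w]

/-- The critical cone `C(xbar)` of (P). -/
def critCone (f : Euc n → ℝ) (c : Euc n → Euc m) (g : Euc m → EReal) (xbar : Euc n) :
    Set (Euc n) :=
  {u | ((fderiv ℝ f xbar u : ℝ) : EReal) + subderiv g (c xbar) (fderiv ℝ c xbar u) ≤ 0}

/-- The directional multiplier set `Λ(xbar, u)`. -/
def dirLambda (f : Euc n → ℝ) (c : Euc n → Euc m) (g : Euc m → EReal) (xbar : Euc n)
    (u : Euc n) : Set (Euc m) :=
  {y | gradLagZero f c xbar y ∧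
    subderiv g (c xbar) (fderiv ℝ c xbar u) = ((inner ℝ y (fderiv ℝ c xbar u) : ℝ) : EReal) ∧
    secondSubderiv g (c xbar) y (fderiv ℝ c xbar u) ≠ ⊥}

/-- The second-order sufficient condition (SOSC) for (P) at `xbar`. -/
def SOSC (f : Euc n → ℝ) (c : Euc n → Euc m) (g : Euc m → EReal) (xbar : Euc n) : Prop :=
  ∀ u ∈ critCone f c g xbar, u ≠ 0 → ∃ y ∈ dirLambda f c g xbar u,
    0 < ((hessLag f c xbar y u u : ℝ) : EReal) + secondSubderiv g (c xbar) y (fderiv ℝ c xbar u)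

/-- The stationarity residual `Θ(x, z, y)`; the distance to the (possibly empty)
subdifferential is taken in `EReal` via an infimum. -/
def Theta (f : Euc n → ℝ) (c : Euc n → Euc m) (g : Euc m → EReal)
    (x : Euc n) (z y : Euc m) : EReal :=
  ((‖fderiv ℝ (LagFn f c y) x‖ + ‖c x - z‖ : ℝ) : EReal) +
    ⨅ v ∈ limSubdiff g z, ((‖y - v‖ : ℝ) : EReal)

/-- The graphical derivative `D(∂g)(zbar, ybar)(v)` of the limiting subdifferential mapping. -/
def gDeriv (g : Euc m → EReal) (zbar ybar v : Euc m) : Set (Euc m) :=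
  {η | (v, η) ∈ tangentCone {p : Euc m × Euc m | p.2 ∈ limSubdiff g p.1} (zbar, ybar)}

/-- The Moreau envelope `g^μ(w)`. -/
def moreau (g : Euc m → EReal) (μ : ℝ) (w : Euc m) : EReal :=
  ⨅ z, (g z + ((‖z - w‖ ^ 2 / (2 * μ) : ℝ) : EReal))

/-- The augmented Lagrangian `L_μ(x, y)` of (P). -/
def ALfun (f : Euc n → ℝ) (c : Euc n → Euc m) (g : Euc m → EReal) (μ : ℝ)
    (x : Euc n) (y : Euc m) : EReal :=
  (f x : EReal) + moreau g μ (c x + μ • y) - ((μ / 2 * ‖y‖ ^ 2 : ℝ) : EReal)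

/-- `xbar` is a strict local minimizer of (P). -/
def StrictLocalMin (f : Euc n → ℝ) (c : Euc n → Euc m) (g : Euc m → EReal)
    (xbar : Euc n) : Prop :=
  c xbar ∈ edom g ∧ ∃ ρ : ℝ, 0 < ρ ∧ ∀ x : Euc n, ‖x - xbar‖ ≤ ρ → c x ∈ edom g → x ≠ xbar →
    (f xbar : EReal) + g (c xbar) < (f x : EReal) + g (c x)

open Classical in
/-- A sequence generated by the safeguarded implicit augmented Lagrangian method
(Algorithm 4.1) for problem (P). -/
structure ALMSeq (n m : ℕ) (f : Euc n → ℝ) (c : Euc n → Euc m) (g : Euc m → EReal) where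
  /-- sufficient-decrease parameter -/
  θ : ℝ
  /-- penalty-reduction parameter -/
  κ : ℝ
  hθ : 0 < θ ∧ θ < 1
  hκ : 0 < κ ∧ κ < 1
  /-- safeguarding set -/
  Y : Set (Euc m)
  hYne : Y.Nonempty
  hYbdd : IsBounded Y
  /-- primal iterates -/
  x : ℕ → Euc n
  /-- auxiliary (certificate) iterates -/
  z : ℕ → Euc m
  /-- safeguarded multiplier estimates -/
  yhat : ℕ → Euc m
  /-- multiplier iterates -/
  y : ℕ → Euc m
  /-- penalty parameters -/
  μ : ℕ → ℝ
  /-- inner tolerances -/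
  ε : ℕ → ℝ
  hyhatY : ∀ k, yhat k ∈ Y
  hεnn : ∀ k, 0 ≤ ε k
  hμthr : ∀ k, BelowThreshold g (μ k)
  /-- `z k ∈ prox_{μ_k g}(c(x^k) + μ_k ŷ^k)` -/
  hprox : ∀ k, ∀ w : Euc m,
    g (z k) + ((‖z k - (c (x k) + μ k • yhat k)‖ ^ 2 / (2 * μ k) : ℝ) : EReal) ≤
      g w + ((‖w - (c (x k) + μ k • yhat k)‖ ^ 2 / (2 * μ k) : ℝ) : EReal)
  /-- dual update rule -/
  hy : ∀ k, y k = yhat k + (μ k)⁻¹ • (c (x k) - z k)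
  /-- approximate stationarity for the subproblem, `‖∇ₓL^S_{μ_k}(x^k,z^k,ŷ^k)‖ ≤ ε_k` -/
  hdual : ∀ k, ‖fderiv ℝ (LagFn f c (y k)) (x k)‖ ≤ ε k
  /-- penalty update rule -/
  hμupd : ∀ k, μ (k + 1) =
    if k = 0 ∨ ‖c (x k) - z k‖ ≤ θ * ‖c (x (k - 1)) - z (k - 1)‖ then μ k else κ * μ k

end Paper

/-!
Prox-boundedness of `h` with parameter `ρ` gives, uniformly for `w` in a bounded set, the quadratic
minorant `h z ≥ b - ‖z - w‖² / ρ`. With `a_k = μ_k h(z^k)` and `q_k = ½‖z^k - z̃^k‖²` this reads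
`μ_k b - (2μ_k/ρ) q_k ≤ a_k`, while the hypothesis says `a_k + q_k ≤ t_k` for some `t_k → 0`.
Since `2μ_k/ρ → 0`, the two bounds squeeze first `q_k` and then `a_k` to `0`.
-/

theorem tendsto_zero_of_sub_mul_le_of_add_le {a q e ε t : ℕ → ℝ} (hq : 0 ≤ q)
    (he : Tendsto e atTop (𝓝 0)) (hε : Tendsto ε atTop (𝓝 0)) (ht : Tendsto t atTop (𝓝 0))
    (hlow : ∀ k, e k - ε k * q k ≤ a k) (hup : ∀ k, a k + q k ≤ t k) :
    Tendsto a atTop (𝓝 0) ∧ Tendsto q atTop (𝓝 0) := by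
  have hq0 : Tendsto q atTop (𝓝 0) := by
    have hupper : Tendsto (fun k => 2 * (t k - e k)) atTop (𝓝 0) := by
      simpa using (ht.sub he).const_mul 2
    refine tendsto_of_tendsto_of_tendsto_of_le_of_le' tendsto_const_nhds hupper
      (Eventually.of_forall hq) ?_
    filter_upwards [hε.eventually (gt_mem_nhds one_half_pos)] with k hk
    have := mul_le_mul_of_nonneg_right hk.le (hq k)
    linarith [hlow k, hup k]
  have hlower : Tendsto (fun k => e k - ε k * q k) atTop (𝓝 0) := by
    simpa using he.sub (hε.mul hq0)
  have hupper : Tendsto (fun k => t k - q k) atTop (𝓝 0) := by simpa using ht.sub hq0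
  exact ⟨tendsto_of_tendsto_of_tendsto_of_le_of_le hlower hupper hlow
    fun k => le_sub_iff_add_le.mpr (hup k), hq0⟩

theorem tendsto_max_zero_of_limsup_coe_nonpos {u : ℕ → ℝ}
    (hu : limsup (fun k => (u k : EReal)) atTop ≤ 0) :
    Tendsto (fun k => max (u k) 0) atTop (𝓝 0) := by
  refine tendsto_order.2 ⟨fun a ha => Eventually.of_forall fun k => ha.trans_le (le_max_right _ _),
    fun a ha => ?_⟩
  have hlt : limsup (fun k => (u k : EReal)) atTop < a := hu.trans_lt (EReal.coe_pos.2 ha)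
  filter_upwards [eventually_lt_of_limsup_lt hlt] with k hk
  exact max_lt (EReal.coe_lt_coe_iff.1 hk) ha

namespace Paper

variable {m : ℕ}

theorem ProxBoundedWith.ne_bot {g : Euc m → EReal} {μ : ℝ} (hg : ProxBoundedWith g μ)
    (z : Euc m) : g z ≠ ⊥ := by
  obtain ⟨b, hb⟩ := hg
  intro hz
  simpa [hz] using hb z

theorem ProxBoundedWith.exists_sub_le_toReal {g : Euc m → EReal} {μ : ℝ}
    (hg : ProxBoundedWith g μ) (hμ : 0 < μ) (M : ℝ) :
    ∃ b : ℝ, ∀ z w, ‖w‖ ≤ M → g z ≠ ⊤ → b - ‖z - w‖ ^ 2 / μ ≤ (g z).toReal := by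
  obtain ⟨b, hb⟩ := id hg
  refine ⟨b - M ^ 2 / μ, fun z w hw hz => ?_⟩
  have hgz : b - ‖z‖ ^ 2 / (2 * μ) ≤ (g z).toReal := by
    have := hb z
    rw [← EReal.coe_toReal hz (hg.ne_bot z), ← EReal.coe_add] at this
    exact sub_le_iff_le_add.2 (EReal.coe_le_coe_iff.1 this)
  have hz2 : ‖z‖ ^ 2 ≤ 2 * ‖z - w‖ ^ 2 + 2 * M ^ 2 := by
    nlinarith [pow_le_pow_left₀ (norm_nonneg _) (norm_le_norm_sub_add z w) 2,
      pow_le_pow_left₀ (norm_nonneg _) hw 2, sq_nonneg (‖z - w‖ - ‖w‖)]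
  have hquad : ‖z‖ ^ 2 / (2 * μ) ≤ ‖z - w‖ ^ 2 / μ + M ^ 2 / μ := by
    rw [← add_div, div_le_div_iff₀ (by positivity) hμ]
    nlinarith
  linarith

theorem statement1_general {m : ℕ} (h : Euc m → EReal)
    (hpb : ProxBounded h)
    (μ : ℕ → ℝ) (hμpos : ∀ k, 0 < μ k)
    (hμ0 : Tendsto μ atTop (𝓝 0))
    (z : ℕ → Euc m) (hz : ∀ k, z k ∈ edom h)
    (zt : ℕ → Euc m) (hzt : IsBounded (Set.range zt))
    (hls : limsup (fun k => (μ k : EReal) * h (z k) + ((‖z k - zt k‖ ^ 2 / 2 : ℝ) : EReal))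
        atTop ≤ 0) :
    Tendsto (fun k => (μ k : EReal) * h (z k)) atTop (𝓝 0) ∧
      Tendsto (fun k => ‖z k - zt k‖) atTop (𝓝 0) := by
  obtain ⟨ρ, hρ, hpbρ⟩ := hpb
  obtain ⟨M, hM⟩ := isBounded_iff_forall_norm_le.1 hzt
  obtain ⟨b, hb⟩ := hpbρ.exists_sub_le_toReal hρ M
  set r := fun k => (h (z k)).toReal
  have hr : ∀ k, h (z k) = r k := fun k => (EReal.coe_toReal (hz k).ne (hpbρ.ne_bot _)).symm
  have hlow : ∀ k, μ k * b - 2 * μ k / ρ * (‖z k - zt k‖ ^ 2 / 2) ≤ μ k * r k := fun k =>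
    calc μ k * b - 2 * μ k / ρ * (‖z k - zt k‖ ^ 2 / 2) = μ k * (b - ‖z k - zt k‖ ^ 2 / ρ) := by
          ring
      _ ≤ μ k * r k :=
          mul_le_mul_of_nonneg_left (hb _ _ (hM _ ⟨k, rfl⟩) (hz k).ne) (hμpos k).le
  have hsum : ∀ k, (μ k : EReal) * h (z k) + ((‖z k - zt k‖ ^ 2 / 2 : ℝ) : EReal) =
      ((μ k * r k + ‖z k - zt k‖ ^ 2 / 2 : ℝ) : EReal) := fun k => by
    rw [hr, EReal.coe_add, EReal.coe_mul]
  obtain ⟨hμr, hdist⟩ := tendsto_zero_of_sub_mul_le_of_add_le (fun k => by positivity)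
    (by simpa using hμ0.mul_const b) (by simpa using (hμ0.const_mul 2).div_const ρ)
    (tendsto_max_zero_of_limsup_coe_nonpos (by simpa only [hsum] using hls)) hlow
    (fun k => le_max_left _ _)
  refine ⟨?_, ?_⟩
  · simpa only [hr, ← EReal.coe_mul, EReal.coe_zero] using EReal.tendsto_coe.2 hμr
  · have hsq : Tendsto (fun k => ‖z k - zt k‖ ^ 2) atTop (𝓝 0) := by
      simpa using (hdist.const_mul 2).congr fun k => by ring
    simpa [Real.sqrt_sq (norm_nonneg _)] using hsq.sqrt

theorem statement1 {m : ℕ} (h : Euc m → EReal)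
    (hproper : ProperFn h) (hlsc : LowerSemicontinuous h) (hpb : ProxBounded h)
    (μ : ℕ → ℝ) (hμpos : ∀ k, 0 < μ k) (hμanti : Antitone μ)
    (hμ0 : Tendsto μ atTop (𝓝 0))
    (z : ℕ → Euc m) (hz : ∀ k, z k ∈ edom h)
    (zt : ℕ → Euc m) (hzt : IsBounded (Set.range zt))
    (hls : limsup (fun k => (μ k : EReal) * h (z k) + ((‖z k - zt k‖ ^ 2 / 2 : ℝ) : EReal))
        atTop ≤ 0) :
    Tendsto (fun k => (μ k : EReal) * h (z k)) atTop (𝓝 0) ∧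
      Tendsto (fun k => ‖z k - zt k‖) atTop (𝓝 0) :=
  statement1_general h hpb μ hμpos hμ0 z hz zt hzt hls

end Paper
end
end

section
/- Let x̄ ∈ ℝ^n be an M-stationary point of problem (P) and fix ȳ ∈ Λ(x̄). Assume the condition: for all u ∈ C(x̄) \ {0}, ∇²_{xx}L(x̄, ȳ)[u, u] + d²g(c(x̄), ȳ)(c'(x̄)u) > 0. Then SOSC holds at x̄ (for every u ∈ C(x̄) \ {0} there exists y ∈ Λ(x̄, u) with ∇²_{xx}L(x̄, y)[u, u] + d²g(c(x̄), y)(c'(x̄)u) > 0), and consequently there exist ε > 0 and β > 0 with φ(x) − φ(x̄) ≥ (β/2)‖x − x̄‖² for all x with ‖x − x̄‖ ≤ ε. -/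
open Filter Topology Bornology

noncomputable section

namespace Paper

variable {n m : ℕ}

/-!
With `y = ȳ`, stationarity turns the critical-cone inequality into
`dg(c x̄)(c'(x̄)u) ≤ ⟨ȳ, c'(x̄)u⟩`, and a strict inequality would force
`d²g(c x̄, ȳ)(c'(x̄)u) = -∞`; hence `ȳ ∈ Λ(x̄, u)` and SOSC holds. The assumption also forces
`g(c x̄) < ∞`, since otherwise both subderivatives are `-∞` in every direction.

If quadratic growth failed, there would be points `x̄ + tₖuₖ` with `tₖ ↓ 0`, `uₖ → ū ≠ 0` and
`φ(x̄ + tₖuₖ) < φ(x̄) + o(tₖ²)`. Comparing the first-order expansion of `f` with the definition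
of `dg` puts `ū` in `C(x̄)`; comparing the second-order expansion of `L(·, ȳ)`, whose gradient
vanishes at `x̄`, with the definition of `d²g` gives
`d²g(c x̄, ȳ)(c'(x̄)ū) ≤ -∇²ₓₓL(x̄, ȳ)[ū, ū]`, contradicting the assumption.
-/

section Calculus

variable {E F : Type*} [NormedAddCommGroup E] [NormedSpace ℝ E]
  [NormedAddCommGroup F] [NormedSpace ℝ F]

theorem exists_taylor_two_segment {ψ : E → ℝ} (hψ : ContDiff ℝ 2 ψ) (x u : E) {t : ℝ}
    (ht : 0 < t) :
    ∃ s ∈ Set.Ioo 0 t, ψ (x + t • u) - ψ x - t * fderiv ℝ ψ x u =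
      fderiv ℝ (fderiv ℝ ψ) (x + s • u) u u * t ^ 2 / 2 := by
  set φ : ℝ → ℝ := fun τ => ψ (x + τ • u)
  have hline : ∀ τ : ℝ, HasDerivAt (fun τ : ℝ => x + τ • u) u τ := fun τ => by
    simpa using ((hasDerivAt_id τ).smul_const u).const_add x
  have hφ' : deriv φ = fun τ => fderiv ℝ ψ (x + τ • u) u := funext fun τ =>
    ((hψ.differentiable two_ne_zero _).hasFDerivAt.comp_hasDerivAt τ (hline τ)).deriv
  have hψ' : Differentiable ℝ (fderiv ℝ ψ) :=
    (hψ.fderiv_right (m := 1) le_rfl).differentiable one_ne_zero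
  have hφ'' : ∀ τ, deriv (fun τ => fderiv ℝ ψ (x + τ • u) u) τ =
      fderiv ℝ (fderiv ℝ ψ) (x + τ • u) u u := fun τ => by
    simpa using
      (((hψ' _).hasFDerivAt.comp_hasDerivAt τ (hline τ)).clm_apply (hasDerivAt_const τ u)).deriv
  have hφ : ContDiff ℝ 2 φ := hψ.comp (contDiff_const.add (contDiff_id.smul contDiff_const))
  obtain ⟨s, hs, h⟩ := taylor_mean_remainder_lagrange_iteratedDeriv (n := 1) ht.ne hφ.contDiffOn
  have hder : derivWithin φ (Set.uIcc 0 t) 0 = deriv φ 0 :=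
    ((hφ.differentiable two_ne_zero) 0).derivWithin
      (uniqueDiffOn_uIcc ht.ne 0 Set.left_mem_uIcc)
  rw [Set.uIoo_of_le ht.le] at hs
  refine ⟨s, hs, ?_⟩
  simpa [taylorWithinEval_succ, taylor_within_zero_eval, iteratedDeriv_succ, hder, hφ', hφ'', φ,
    sub_sub] using h

theorem tendsto_taylor_two_quotient {α : Type*} {l : Filter α} {ψ : E → ℝ}
    (hψ : ContDiff ℝ 2 ψ) (x : E) {t : α → ℝ} {u : α → E} {ū : E} (ht : ∀ a, 0 < t a)
    (ht0 : Tendsto t l (𝓝 0)) (hu : Tendsto u l (𝓝 ū)) :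
    Tendsto (fun a => (ψ (x + t a • u a) - ψ x - t a * fderiv ℝ ψ x (u a)) / (t a ^ 2 / 2)) l
      (𝓝 (fderiv ℝ (fderiv ℝ ψ) x ū ū)) := by
  choose s hs hrem using fun a => exists_taylor_two_segment hψ x (u a) (ht a)
  have hs0 : Tendsto s l (𝓝 0) :=
    squeeze_zero (fun a => (hs a).1.le) (fun a => (hs a).2.le) ht0
  have hmid : Tendsto (fun a => x + s a • u a) l (𝓝 x) := by
    simpa using tendsto_const_nhds.add (hs0.smul hu)
  have hψ'' : Continuous fun p : E × E => fderiv ℝ (fderiv ℝ ψ) p.1 p.2 p.2 :=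
    (((hψ.fderiv_right (m := 1) le_rfl).continuous_fderiv one_ne_zero).comp
      continuous_fst |>.clm_apply continuous_snd).clm_apply continuous_snd
  refine ((hψ''.tendsto (x, ū)).comp (hmid.prodMk_nhds hu)).congr fun a => ?_
  rw [Function.comp_apply, hrem a]
  field_simp [(ht a).ne']

theorem tendsto_inv_smul_sub {α : Type*} {l : Filter α} {ψ : E → F} {x : E}
    (hψ : DifferentiableAt ℝ ψ x) {t : α → ℝ} {u : α → E} {ū : E} (ht : ∀ a, t a ≠ 0)
    (ht0 : Tendsto t l (𝓝 0)) (hu : Tendsto u l (𝓝 ū)) :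
    Tendsto (fun a => (t a)⁻¹ • (ψ (x + t a • u a) - ψ x)) l (𝓝 (fderiv ℝ ψ x ū)) :=
  (hψ.hasFDerivAt.hasFDerivWithinAt (s := Set.univ)).lim (by simpa using ht0.smul hu)
    (by simp) (by simpa [smul_smul, inv_mul_cancel₀ (ht _)] using hu)

end Calculus

theorem liminf_le_of_tendsto_seq {α : Type*} {u : α → EReal} {l : Filter α} {s : ℕ → α}
    (hs : Tendsto s atTop l) {r : ℕ → EReal} {b : EReal} (hle : ∀ k, u (s k) ≤ r k)
    (hr : Tendsto r atTop (𝓝 b)) : liminf u l ≤ b :=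
  calc liminf u l ≤ liminf (u ∘ s) atTop := by
        rw [liminf_comp]; exact liminf_le_liminf_of_le hs
    _ ≤ liminf r atTop := liminf_le_liminf (Eventually.of_forall hle)
    _ = b := hr.liminf_eq

theorem EReal.sub_coe_le_coe {X : EReal} {B a : ℝ} (h : X ≤ B) : X - a ≤ ((B - a : ℝ) : EReal) := by
  rw [EReal.coe_sub]
  exact EReal.sub_le_sub h le_rfl

theorem EReal.div_coe_le_coe {X : EReal} {B d : ℝ} (hd : 0 < d) (h : X ≤ B) :
    X / d ≤ ((B / d : ℝ) : EReal) := by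
  rw [EReal.coe_div]
  exact EReal.div_le_div_right_of_nonneg (by exact_mod_cast hd.le) h

theorem EReal.le_coe_sub_of_coe_add_le {X : EReal} {r B : ℝ} (h : (r : EReal) + X ≤ B) :
    X ≤ ((B - r : ℝ) : EReal) :=
  calc X = ((-r : ℝ) : EReal) + (r + X) := by
        rw [← add_assoc, ← EReal.coe_add, neg_add_cancel, EReal.coe_zero, zero_add]
    _ ≤ ((-r : ℝ) : EReal) + B := add_le_add_right h _
    _ = ((B - r : ℝ) : EReal) := by rw [← EReal.coe_add, neg_add_eq_sub]

theorem tendsto_prod_nhdsGT_of_seq {E : Type*} [TopologicalSpace E] {t : ℕ → ℝ} {w : ℕ → E}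
    {v : E} (ht : ∀ k, 0 < t k) (ht0 : Tendsto t atTop (𝓝 0)) (hw : Tendsto w atTop (𝓝 v)) :
    Tendsto (fun k => (t k, w k)) atTop (𝓝[>] (0 : ℝ) ×ˢ 𝓝 v) :=
  (tendsto_nhdsWithin_iff.2 ⟨ht0, Eventually.of_forall ht⟩).prodMk hw

section Subderivatives

variable {g : Euc m → EReal} {z v y : Euc m}

theorem subderiv_le_of_tendsto {a b : ℝ} (hz : g z = a) {t B : ℕ → ℝ} {w : ℕ → Euc m}
    (ht : ∀ k, 0 < t k) (ht0 : Tendsto t atTop (𝓝 0)) (hw : Tendsto w atTop (𝓝 v))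
    (hB : ∀ k, g (z + t k • w k) ≤ B k)
    (hlim : Tendsto (fun k => (B k - a) / t k) atTop (𝓝 b)) :
    subderiv g z v ≤ b :=
  liminf_le_of_tendsto_seq (tendsto_prod_nhdsGT_of_seq ht ht0 hw)
    (fun k => hz ▸ EReal.div_coe_le_coe (ht k) (EReal.sub_coe_le_coe (hB k)))
    (EReal.tendsto_coe.2 hlim)

theorem secondSubderiv_le_of_tendsto {a b : ℝ} (hz : g z = a) {t B : ℕ → ℝ} {w : ℕ → Euc m}
    (ht : ∀ k, 0 < t k) (ht0 : Tendsto t atTop (𝓝 0)) (hw : Tendsto w atTop (𝓝 v))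
    (hB : ∀ k, g (z + t k • w k) ≤ B k)
    (hlim : Tendsto (fun k => (B k - a - t k * inner ℝ y (w k)) / (t k ^ 2 / 2)) atTop (𝓝 b)) :
    secondSubderiv g z y v ≤ b :=
  liminf_le_of_tendsto_seq (tendsto_prod_nhdsGT_of_seq ht ht0 hw)
    (fun k => hz ▸ EReal.div_coe_le_coe (by have := ht k; positivity)
      (EReal.sub_coe_le_coe (EReal.sub_coe_le_coe (hB k))))
    (EReal.tendsto_coe.2 hlim)

theorem subderiv_eq_bot_of_eq_top (hz : g z = ⊤) : subderiv g z v = ⊥ := by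
  refine (liminf_congr ?_).trans (liminf_const ⊥)
  filter_upwards [(eventually_mem_nhdsWithin (a := (0 : ℝ)) (s := Set.Ioi 0)).prod_inl (𝓝 v)]
    with p hp
  rw [hz, EReal.sub_top, EReal.bot_div_of_pos_ne_top (by exact_mod_cast hp) (by simp)]

theorem secondSubderiv_eq_bot_of_eq_top (hz : g z = ⊤) : secondSubderiv g z y v = ⊥ := by
  refine (liminf_congr ?_).trans (liminf_const ⊥)
  filter_upwards [(eventually_mem_nhdsWithin (a := (0 : ℝ)) (s := Set.Ioi 0)).prod_inl (𝓝 v)]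
    with p hp
  have hp : (0 : ℝ) < p.1 ^ 2 / 2 := by have : 0 < p.1 := hp; positivity
  rw [hz, EReal.sub_top, EReal.bot_sub,
    EReal.bot_div_of_pos_ne_top (by exact_mod_cast hp) (by simp)]

theorem secondSubderiv_eq_bot_of_subderiv_lt {a : ℝ} (hz : g z = a)
    (hlt : subderiv g z v < ((inner ℝ y v : ℝ) : EReal)) : secondSubderiv g z y v = ⊥ := by
  obtain ⟨β, hdβ, hβ⟩ := EReal.exists_between_coe_real hlt
  set α := inner ℝ y v
  have hβα : β < α := by exact_mod_cast hβ
  suffices h : ∀ M : ℝ, secondSubderiv g z y v ≤ M from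
    (EReal.eq_bot_iff_forall_lt _).2 fun M =>
      (h (M - 1)).trans_lt (EReal.coe_lt_coe_iff.2 (sub_one_lt M))
  intro M
  set δ := (α - β) / (|M| + 1)
  have hδ : 0 < δ := div_pos (by linarith) (by positivity)
  have hsmall : ∀ᶠ p : ℝ × Euc m in 𝓝[>] 0 ×ˢ 𝓝 v, p.1 ∈ Set.Ioo 0 δ :=
    Eventually.prod_inl (Ioo_mem_nhdsGT hδ) _
  have hnear : ∀ᶠ p : ℝ × Euc m in 𝓝[>] 0 ×ˢ 𝓝 v, (α + β) / 2 < inner ℝ y p.2 :=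
    (((continuous_const.inner continuous_id).tendsto v).eventually
      (lt_mem_nhds (by simp only [id]; linarith))).prod_inr _
  refine liminf_le_of_frequently_le' (((frequently_lt_of_liminf_lt (h := hdβ)).and_eventually
    (hsmall.and hnear)).mono ?_)
  rintro ⟨t, w⟩ ⟨hq, ⟨ht, htδ⟩, hw⟩
  dsimp only at hq ht htδ hw ⊢
  rw [hz] at hq ⊢
  have hX : g (z + t • w) ≤ ((t * β + a : ℝ) : EReal) := by
    have h := (EReal.div_le_iff_le_mul (by exact_mod_cast ht) (EReal.coe_ne_top t)).1 hq.le
    rwa [EReal.sub_le_iff_le_add (Or.inl (EReal.coe_ne_bot a)) (Or.inl (EReal.coe_ne_top a)),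
      ← EReal.coe_mul, ← EReal.coe_add] at h
  refine (EReal.div_coe_le_coe (by positivity)
    (EReal.sub_coe_le_coe (EReal.sub_coe_le_coe hX))).trans (EReal.coe_le_coe_iff.2 ?_)
  -- for `t < δ` the drop `t (α - β) / 2` of the first-order term beats `M t² / 2`
  -- the quotient is `2 (β - ⟪y, w⟫) / t < (β - α) / t`, and `(β - α) / t ≤ M` as `t < δ`
  have htM : t * (|M| + 1) < α - β := (lt_div_iff₀ (by positivity)).1 htδ
  rw [div_le_iff₀ (by positivity)]
  nlinarith [neg_abs_le M]

end Subderivatives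

def QuadraticGrowthAt {E : Type*} [NormedAddCommGroup E] (Φ : E → EReal) (xbar : E) : Prop :=
  ∃ ε : ℝ, 0 < ε ∧ ∃ β : ℝ, 0 < β ∧ ∀ x : E, ‖x - xbar‖ ≤ ε →
    Φ xbar + ((β / 2 * ‖x - xbar‖ ^ 2 : ℝ) : EReal) ≤ Φ x

theorem exists_seq_of_not_quadraticGrowthAt {E : Type*} [NormedAddCommGroup E]
    [NormedSpace ℝ E] [ProperSpace E] {Φ : E → EReal} {xbar : E}
    (h : ¬ QuadraticGrowthAt Φ xbar) :
    ∃ (t δ : ℕ → ℝ) (u : ℕ → E) (ū : E), ū ≠ 0 ∧ (∀ k, 0 < t k) ∧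
      Tendsto t atTop (𝓝 0) ∧ Tendsto δ atTop (𝓝 0) ∧ Tendsto u atTop (𝓝 ū) ∧
      ∀ k, Φ (xbar + t k • u k) < Φ xbar + ((δ k / 2 * t k ^ 2 : ℝ) : EReal) := by
  simp only [QuadraticGrowthAt, not_exists, not_and, not_forall, not_le] at h
  choose x hx hΦ using fun k : ℕ => h (1 / (k + 1)) (by positivity) (1 / (k + 1)) (by positivity)
  set t := fun k => ‖x k - xbar‖
  have ht : ∀ k, 0 < t k := fun k => norm_pos_iff.2 fun h0 => by
    simpa [sub_eq_zero.1 h0] using hΦ k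
  have hxtu : ∀ k, xbar + t k • (t k)⁻¹ • (x k - xbar) = x k := fun k => by
    rw [smul_inv_smul₀ (ht k).ne', add_sub_cancel]
  have hsphere : ∀ k, (t k)⁻¹ • (x k - xbar) ∈ Metric.sphere (0 : E) 1 := fun k => by
    simp [norm_smul, t, (ht k).ne']
  obtain ⟨ū, hū, σ, hσ, hu⟩ := (isCompact_sphere (0 : E) 1).tendsto_subseq hsphere
  have ht0 : Tendsto t atTop (𝓝 0) :=
    squeeze_zero (fun k => (ht k).le) hx tendsto_one_div_add_atTop_nhds_zero_nat
  refine ⟨t ∘ σ, fun k => 1 / ((σ k : ℝ) + 1), _, ū, ne_zero_of_mem_unit_sphere ⟨ū, hū⟩,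
    fun k => ht (σ k), ht0.comp hσ.tendsto_atTop,
    tendsto_one_div_add_atTop_nhds_zero_nat.comp hσ.tendsto_atTop, hu, fun k => ?_⟩
  simpa [hxtu] using hΦ (σ k)

def FixedMultiplierSOSC (f : Euc n → ℝ) (c : Euc n → Euc m) (g : Euc m → EReal) (xbar : Euc n)
    (ybar : Euc m) : Prop :=
  ∀ u ∈ critCone f c g xbar, u ≠ 0 →
    0 < ((hessLag f c xbar ybar u u : ℝ) : EReal) +
      secondSubderiv g (c xbar) ybar (fderiv ℝ c xbar u)

section Problem

variable {f : Euc n → ℝ} {c : Euc n → Euc m} {g : Euc m → EReal} {xbar : Euc n} {ybar : Euc m}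
  {a : ℝ} {t δ : ℕ → ℝ} {u : ℕ → Euc n} {ū : Euc n}

theorem hasFDerivAt_lagFn (hf : DifferentiableAt ℝ f xbar) (hc : DifferentiableAt ℝ c xbar) :
    HasFDerivAt (LagFn f c ybar) (fderiv ℝ f xbar + (innerSL ℝ ybar).comp (fderiv ℝ c xbar))
      xbar :=
  hf.hasFDerivAt.add ((innerSL ℝ ybar).hasFDerivAt.comp xbar hc.hasFDerivAt)

theorem fderiv_apply_eq_neg_inner_of_gradLagZero (hf : DifferentiableAt ℝ f xbar)
    (hc : DifferentiableAt ℝ c xbar) (hgrad : gradLagZero f c xbar ybar) (u : Euc n) :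
    fderiv ℝ f xbar u = -inner ℝ ybar (fderiv ℝ c xbar u) := by
  have h := congrArg (· u) ((hasFDerivAt_lagFn hf hc).fderiv.symm.trans hgrad)
  simp only [add_apply, ContinuousLinearMap.comp_apply, innerSL_apply_apply,
    zero_apply] at h
  linarith

theorem hessLag_eq_fderiv_fderiv (u : Euc n) :
    hessLag f c xbar ybar u u = fderiv ℝ (fderiv ℝ (LagFn f c ybar)) xbar u u := by
  simp [hessLag, iteratedFDeriv_two_apply]

theorem ne_top_of_fixedMultiplierSOSC (hcond : FixedMultiplierSOSC f c g xbar ybar) {u : Euc n}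
    (hu : u ≠ 0) : g (c xbar) ≠ ⊤ := fun htop => by
  have hcrit : u ∈ critCone f c g xbar := by
    simp [critCone, subderiv_eq_bot_of_eq_top htop]
  simpa [secondSubderiv_eq_bot_of_eq_top htop] using hcond u hcrit hu

theorem sosc_of_fixedMultiplierSOSC (hf : DifferentiableAt ℝ f xbar)
    (hc : DifferentiableAt ℝ c xbar) (hgrad : gradLagZero f c xbar ybar)
    (hbot : g (c xbar) ≠ ⊥) (hcond : FixedMultiplierSOSC f c g xbar ybar) :
    SOSC f c g xbar := by
  intro u hu hu0
  have hpos := hcond u hu hu0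
  have hd2 : secondSubderiv g (c xbar) ybar (fderiv ℝ c xbar u) ≠ ⊥ := fun h => by
    simp [h] at hpos
  have hle : subderiv g (c xbar) (fderiv ℝ c xbar u) ≤ inner ℝ ybar (fderiv ℝ c xbar u) := by
    have h := EReal.le_coe_sub_of_coe_add_le (B := 0) hu
    rwa [fderiv_apply_eq_neg_inner_of_gradLagZero hf hc hgrad, zero_sub, neg_neg] at h
  have heq : subderiv g (c xbar) (fderiv ℝ c xbar u) = inner ℝ ybar (fderiv ℝ c xbar u) :=
    hle.eq_of_not_lt fun hlt => hd2 (secondSubderiv_eq_bot_of_subderiv_lt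
      (EReal.coe_toReal (ne_top_of_fixedMultiplierSOSC hcond hu0) hbot).symm hlt)
  exact ⟨ybar, ⟨hgrad, heq, hd2⟩, hpos⟩

theorem mem_critCone_of_seq (hf : DifferentiableAt ℝ f xbar) (hc : DifferentiableAt ℝ c xbar)
    (ha : g (c xbar) = a) (ht : ∀ k, 0 < t k) (ht0 : Tendsto t atTop (𝓝 0))
    (hδ : Tendsto δ atTop (𝓝 0)) (hu : Tendsto u atTop (𝓝 ū))
    (hdec : ∀ k, g (c (xbar + t k • u k)) ≤
      ((f xbar + a + δ k / 2 * t k ^ 2 - f (xbar + t k • u k) : ℝ) : EReal)) :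
    ū ∈ critCone f c g xbar := by
  set v := fun k => (t k)⁻¹ • (c (xbar + t k • u k) - c xbar)
  have hv : Tendsto v atTop (𝓝 (fderiv ℝ c xbar ū)) :=
    tendsto_inv_smul_sub hc (fun k => (ht k).ne') ht0 hu
  have hcv : ∀ k, c xbar + t k • v k = c (xbar + t k • u k) := fun k => by
    simp [v, smul_inv_smul₀ (ht k).ne']
  have hlim := ((hδ.div_const 2).mul ht0).sub
    (tendsto_inv_smul_sub hf (fun k => (ht k).ne') ht0 hu)
  rw [zero_div, zero_mul, zero_sub] at hlim
  have hsub : subderiv g (c xbar) (fderiv ℝ c xbar ū) ≤ ((-fderiv ℝ f xbar ū : ℝ) : EReal) :=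
    subderiv_le_of_tendsto ha ht ht0 hv (fun k => (hcv k).symm ▸ hdec k)
      (hlim.congr fun k => by rw [smul_eq_mul]; field_simp [(ht k).ne']; ring)
  calc ((fderiv ℝ f xbar ū : ℝ) : EReal) + subderiv g (c xbar) (fderiv ℝ c xbar ū)
      ≤ ((fderiv ℝ f xbar ū : ℝ) : EReal) + ((-fderiv ℝ f xbar ū : ℝ) : EReal) :=
        add_le_add_right hsub _
    _ = 0 := by rw [← EReal.coe_add, add_neg_cancel, EReal.coe_zero]

theorem secondSubderiv_le_neg_hessLag_of_seq (hf : ContDiff ℝ 2 f) (hc : ContDiff ℝ 2 c)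
    (hgrad : gradLagZero f c xbar ybar) (ha : g (c xbar) = a) (ht : ∀ k, 0 < t k)
    (ht0 : Tendsto t atTop (𝓝 0)) (hδ : Tendsto δ atTop (𝓝 0)) (hu : Tendsto u atTop (𝓝 ū))
    (hdec : ∀ k, g (c (xbar + t k • u k)) ≤
      ((f xbar + a + δ k / 2 * t k ^ 2 - f (xbar + t k • u k) : ℝ) : EReal)) :
    secondSubderiv g (c xbar) ybar (fderiv ℝ c xbar ū) ≤
      ((-hessLag f c xbar ybar ū ū : ℝ) : EReal) := by
  set v := fun k => (t k)⁻¹ • (c (xbar + t k • u k) - c xbar)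
  have hv : Tendsto v atTop (𝓝 (fderiv ℝ c xbar ū)) :=
    tendsto_inv_smul_sub (hc.differentiable two_ne_zero xbar) (fun k => (ht k).ne') ht0 hu
  have hcv : ∀ k, c xbar + t k • v k = c (xbar + t k • u k) := fun k => by
    simp [v, smul_inv_smul₀ (ht k).ne']
  have hL : ContDiff ℝ 2 (LagFn f c ybar) := hf.add (contDiff_const.inner ℝ hc)
  have hlim := hδ.sub (tendsto_taylor_two_quotient hL xbar ht ht0 hu)
  rw [zero_sub, ← hessLag_eq_fderiv_fderiv] at hlim
  refine secondSubderiv_le_of_tendsto ha ht ht0 hv (fun k => (hcv k).symm ▸ hdec k)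
    (hlim.congr fun k => ?_)
  rw [hgrad]
  simp only [LagFn, v, inner_smul_right, inner_sub_right, zero_apply]
  field_simp [(ht k).ne']
  ring

theorem quadraticGrowthAt_of_fixedMultiplierSOSC (hf : ContDiff ℝ 2 f) (hc : ContDiff ℝ 2 c)
    (hgrad : gradLagZero f c xbar ybar) (hbot : g (c xbar) ≠ ⊥)
    (hcond : FixedMultiplierSOSC f c g xbar ybar) :
    QuadraticGrowthAt (fun x => (f x : EReal) + g (c x)) xbar := by
  by_contra hgrowth
  obtain ⟨t, δ, u, ū, hū, ht, ht0, hδ, hu, hlt⟩ := exists_seq_of_not_quadraticGrowthAt hgrowth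
  set a := (g (c xbar)).toReal
  have ha : g (c xbar) = a := (EReal.coe_toReal (ne_top_of_fixedMultiplierSOSC hcond hū) hbot).symm
  have hdec : ∀ k, g (c (xbar + t k • u k)) ≤
      ((f xbar + a + δ k / 2 * t k ^ 2 - f (xbar + t k • u k) : ℝ) : EReal) := fun k =>
    EReal.le_coe_sub_of_coe_add_le (by simpa [ha] using (hlt k).le)
  have hcrit := mem_critCone_of_seq (hf.differentiable two_ne_zero xbar)
    (hc.differentiable two_ne_zero xbar) ha ht ht0 hδ hu hdec
  have hd2 := secondSubderiv_le_neg_hessLag_of_seq hf hc hgrad ha ht ht0 hδ hu hdec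
  have hpos := (hcond ū hcrit hū).trans_le (add_le_add_right hd2 _)
  rw [← EReal.coe_add, add_neg_cancel, EReal.coe_zero] at hpos
  exact hpos.false

end Problem

theorem statement7_general {n m : ℕ}
    (f : Euc n → ℝ) (c : Euc n → Euc m) (g : Euc m → EReal)
    (hf : ContDiff ℝ 2 f) (hc : ContDiff ℝ 2 c)
    (hgp : ProperFn g)
    (xbar : Euc n) (ybar : Euc m) (hybar : ybar ∈ Lambda f c g xbar)
    (hcond : ∀ u ∈ critCone f c g xbar, u ≠ 0 →
      0 < ((hessLag f c xbar ybar u u : ℝ) : EReal) +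
        secondSubderiv g (c xbar) ybar (fderiv ℝ c xbar u)) :
    SOSC f c g xbar ∧
      ∃ ε : ℝ, 0 < ε ∧ ∃ β : ℝ, 0 < β ∧ ∀ x : Euc n, ‖x - xbar‖ ≤ ε →
        ((f xbar : EReal) + g (c xbar)) + ((β / 2 * ‖x - xbar‖ ^ 2 : ℝ) : EReal)
          ≤ (f x : EReal) + g (c x) :=
  ⟨sosc_of_fixedMultiplierSOSC (hf.differentiable two_ne_zero xbar)
      (hc.differentiable two_ne_zero xbar) hybar.1 (hgp.1 _) hcond,
    quadraticGrowthAt_of_fixedMultiplierSOSC hf hc hybar.1 (hgp.1 _) hcond⟩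

theorem statement7 {n m : ℕ}
    (f : Euc n → ℝ) (c : Euc n → Euc m) (g : Euc m → EReal)
    (hf : ContDiff ℝ 2 f) (hc : ContDiff ℝ 2 c)
    (hgp : ProperFn g) (hglsc : LowerSemicontinuous g) (hgpb : ProxBounded g)
    (hphi : ∃ r : ℝ, (⨅ x : Euc n, ((f x : EReal) + g (c x))) = (r : EReal))
    (xbar : Euc n) (ybar : Euc m) (hybar : ybar ∈ Lambda f c g xbar)
    (hcond : ∀ u ∈ critCone f c g xbar, u ≠ 0 →
      0 < ((hessLag f c xbar ybar u u : ℝ) : EReal) +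
        secondSubderiv g (c xbar) ybar (fderiv ℝ c xbar u)) :
    SOSC f c g xbar ∧
      ∃ ε : ℝ, 0 < ε ∧ ∃ β : ℝ, 0 < β ∧ ∀ x : Euc n, ‖x - xbar‖ ≤ ε →
        ((f xbar : EReal) + g (c xbar)) + ((β / 2 * ‖x - xbar‖ ^ 2 : ℝ) : EReal)
          ≤ (f x : EReal) + g (c x) :=
  statement7_general f c g hf hc hgp xbar ybar hybar hcond

end Paper
end
end

section
/- Let x̄ ∈ ℝ^n be an M-stationary point of problem (P) and fix ȳ ∈ Λ(x̄). If D(∂g)(c(x̄), ȳ)(0) ∩ ker c'(x̄)^⊤ = {0}, then there exists a neighborhood V ⊆ ℝ^m of ȳ such that Λ(x̄) ∩ V = {ȳ}. In particular, if Λ(x̄) is convex, then Λ(x̄) = {ȳ}. -/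
open Filter Topology Bornology

noncomputable section

namespace Paper

variable {n m : ℕ}

/-!
If `ybar` were an accumulation point of `Λ(xbar)`, the normalized differences
`(y - ybar) / ‖y - ybar‖` of multipliers `y → ybar` would have a unit limit `η` along a
subsequence. Since every `y` lies in `∂g(c xbar)`, `(0, η)` is tangent to `gph ∂g` at
`(c xbar, ybar)`, i.e. `η ∈ D(∂g)(c xbar, ybar)(0)`; and since `∇ₓL(xbar, ·)` is affine, the
differences `y - ybar` are orthogonal to the range of `c'(xbar)`, so `η ∈ ker c'(xbar)ᵀ`. This
contradicts the qualification condition. A convex set is accumulated at each of its points by the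
segment towards any other point, hence a convex `Λ(xbar)` is `{ybar}`.
-/

section TangentCone

variable {E F : Type*} [NormedAddCommGroup E] [NormedSpace ℝ E]
  [NormedAddCommGroup F] [NormedSpace ℝ F]

theorem exists_norm_eq_one_mem_tangentCone [ProperSpace E] {S : Set E} {ybar : E}
    (K : Submodule ℝ E) (hK : IsClosed (K : Set E)) (hSK : ∀ y ∈ S, y - ybar ∈ K)
    (hacc : AccPt ybar (𝓟 S)) :
    ∃ η ∈ tangentCone S ybar, η ∈ K ∧ ‖η‖ = 1 := by
  rw [accPt_principal_iff_clusterPt, ← mem_closure_iff_clusterPt] at hacc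
  obtain ⟨y, hyS, hy⟩ := mem_closure_iff_seq_limit.mp hacc
  set t : ℕ → ℝ := fun k => ‖y k - ybar‖
  have ht_pos : ∀ k, 0 < t k := fun k => norm_pos_iff.mpr (sub_ne_zero.mpr (hyS k).2)
  have ht : Tendsto t atTop (𝓝 0) := by
    simpa [t] using (hy.sub_const ybar).norm
  set w : ℕ → E := fun k => (t k)⁻¹ • (y k - ybar)
  have hw_sphere : ∀ k, w k ∈ Metric.sphere (0 : E) 1 := fun k => by
    simp [w, t, norm_smul, (ht_pos k).ne']
  have hy_eq : ∀ k, ybar + t k • w k = y k := fun k => by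
    simp [w, smul_inv_smul₀ (ht_pos k).ne']
  obtain ⟨η, hη_sphere, ψ, hψ, hwψ⟩ := (isCompact_sphere (0 : E) 1).tendsto_subseq hw_sphere
  refine ⟨η, ⟨t ∘ ψ, w ∘ ψ, fun k => ht_pos _, ht.comp hψ.tendsto_atTop, hwψ, fun k => ?_⟩,
    hK.mem_of_tendsto hwψ (Eventually.of_forall fun k => ?_), by simpa using hη_sphere⟩
  · simpa [hy_eq] using (hyS (ψ k)).1
  · exact K.smul_mem _ (hSK _ (hyS (ψ k)).1)

theorem prodMk_zero_mem_tangentCone {Ω : Set (E × F)} {S : Set F} {x : E} {y η : F}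
    (hS : ∀ y' ∈ S, (x, y') ∈ Ω) (hη : η ∈ tangentCone S y) :
    ((0 : E), η) ∈ tangentCone Ω (x, y) := by
  obtain ⟨t, w, ht_pos, ht, hw, hmem⟩ := hη
  refine ⟨t, fun k => ((0 : E), w k), ht_pos, ht, tendsto_const_nhds.prodMk_nhds hw,
    fun k => ?_⟩
  simpa using hS _ (hmem k)

end TangentCone

theorem _root_.Convex.accPt_of_mem_of_ne {E : Type*} [AddCommGroup E] [Module ℝ E]
    [TopologicalSpace E] [IsTopologicalAddGroup E] [ContinuousSMul ℝ E] {S : Set E} {x z : E}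
    (hS : Convex ℝ S) (hx : x ∈ S) (hz : z ∈ S) (hne : z ≠ x) : AccPt x (𝓟 S) := by
  rw [accPt_principal_iff_clusterPt, ← mem_closure_iff_clusterPt]
  have hlim : Tendsto (AffineMap.lineMap x z) (𝓝[>] (0 : ℝ)) (𝓝 x) := by
    simpa using (AffineMap.lineMap_continuous.tendsto' (0 : ℝ) x (by simp)).mono_left
      nhdsWithin_le_nhds
  refine mem_closure_of_tendsto hlim ?_
  filter_upwards [Ioo_mem_nhdsGT one_pos] with t ht
  exact ⟨hS.lineMap_mem hx hz ⟨ht.1.le, ht.2.le⟩,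
    by simp [AffineMap.lineMap_eq_left_iff, hne.symm, ht.1.ne']⟩

theorem fderiv_lagFn_apply {f : Euc n → ℝ} {c : Euc n → Euc m} {x : Euc n}
    (hf : DifferentiableAt ℝ f x) (hc : DifferentiableAt ℝ c x) (y : Euc m) (u : Euc n) :
    fderiv ℝ (LagFn f c y) x u = fderiv ℝ f x u + inner ℝ y (fderiv ℝ c x u) := by
  have hL : HasFDerivAt (LagFn f c y) (fderiv ℝ f x + (innerSL ℝ y).comp (fderiv ℝ c x)) x :=
    hf.hasFDerivAt.add ((innerSL ℝ y).hasFDerivAt.comp x hc.hasFDerivAt)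
  simp [hL.fderiv]

theorem sub_mem_orthogonal_range_of_gradLagZero {f : Euc n → ℝ} {c : Euc n → Euc m}
    {x : Euc n} (hf : DifferentiableAt ℝ f x) (hc : DifferentiableAt ℝ c x) {y y' : Euc m}
    (hy : gradLagZero f c x y) (hy' : gradLagZero f c x y') :
    y - y' ∈ (LinearMap.range (fderiv ℝ c x : Euc n →ₗ[ℝ] Euc m))ᗮ := by
  rw [Submodule.mem_orthogonal']
  rintro _ ⟨u, rfl⟩
  have h := fderiv_lagFn_apply hf hc y u
  have h' := fderiv_lagFn_apply hf hc y' u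
  rw [gradLagZero] at hy hy'
  simp only [hy, hy', zero_apply] at h h'
  simp only [ContinuousLinearMap.coe_coe, inner_sub_left]
  linarith

theorem not_accPt_Lambda {f : Euc n → ℝ} {c : Euc n → Euc m} {g : Euc m → EReal}
    {xbar : Euc n} {ybar : Euc m} (hf : DifferentiableAt ℝ f xbar)
    (hc : DifferentiableAt ℝ c xbar) (hybar : ybar ∈ Lambda f c g xbar)
    (hcq : gDeriv g (c xbar) ybar 0 ∩
        {η : Euc m | ∀ u : Euc n, (inner ℝ η (fderiv ℝ c xbar u) : ℝ) = 0} = {0}) :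
    ¬AccPt ybar (𝓟 (Lambda f c g xbar)) := by
  intro hacc
  obtain ⟨η, hη_tan, hη_ker, hη_norm⟩ := exists_norm_eq_one_mem_tangentCone _
    (Submodule.isClosed_orthogonal _)
    (fun y hy => sub_mem_orthogonal_range_of_gradLagZero hf hc hy.1 hybar.1) hacc
  have hη_mem : η ∈ gDeriv g (c xbar) ybar 0 ∩
      {η : Euc m | ∀ u : Euc n, (inner ℝ η (fderiv ℝ c xbar u) : ℝ) = 0} :=
    ⟨prodMk_zero_mem_tangentCone (fun y hy => hy.2) hη_tan, fun u =>
      (Submodule.mem_orthogonal' _ _).mp hη_ker _ ⟨u, rfl⟩⟩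
  rw [hcq, Set.mem_singleton_iff] at hη_mem
  simp [hη_mem] at hη_norm

theorem statement10_general {n m : ℕ}
    (f : Euc n → ℝ) (c : Euc n → Euc m) (g : Euc m → EReal)
    (hf : ContDiff ℝ 2 f) (hc : ContDiff ℝ 2 c)
    (xbar : Euc n) (ybar : Euc m) (hybar : ybar ∈ Lambda f c g xbar)
    (hcq : gDeriv g (c xbar) ybar 0 ∩
        {η : Euc m | ∀ u : Euc n, (inner ℝ η (fderiv ℝ c xbar u) : ℝ) = 0} = {0}) :
    (∃ V ∈ 𝓝 ybar, Lambda f c g xbar ∩ V = {ybar}) ∧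
      (Convex ℝ (Lambda f c g xbar) → Lambda f c g xbar = {ybar}) := by
  have hiso := not_accPt_Lambda (hf.differentiable two_ne_zero xbar)
    (hc.differentiable two_ne_zero xbar) hybar hcq
  refine ⟨?_, fun hconv => Set.eq_singleton_iff_unique_mem.mpr ⟨hybar, fun y hy => ?_⟩⟩
  · obtain ⟨V, hV, hV_eq⟩ : ∃ V ∈ 𝓝 ybar, ∀ y ∈ V ∩ Lambda f c g xbar, y = ybar := by
      simpa [accPt_iff_nhds] using hiso
    exact ⟨V, hV, Set.eq_singleton_iff_unique_mem.mpr
      ⟨⟨hybar, mem_of_mem_nhds hV⟩, fun y hy => hV_eq y ⟨hy.2, hy.1⟩⟩⟩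
  · by_contra hne
    exact hiso (hconv.accPt_of_mem_of_ne hybar hy hne)

theorem statement10 {n m : ℕ}
    (f : Euc n → ℝ) (c : Euc n → Euc m) (g : Euc m → EReal)
    (hf : ContDiff ℝ 2 f) (hc : ContDiff ℝ 2 c)
    (hgp : ProperFn g) (hglsc : LowerSemicontinuous g) (hgpb : ProxBounded g)
    (hphi : ∃ r : ℝ, (⨅ x : Euc n, ((f x : EReal) + g (c x))) = (r : EReal))
    (xbar : Euc n) (ybar : Euc m) (hybar : ybar ∈ Lambda f c g xbar)
    (hcq : gDeriv g (c xbar) ybar 0 ∩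
        {η : Euc m | ∀ u : Euc n, (inner ℝ η (fderiv ℝ c xbar u) : ℝ) = 0} = {0}) :
    (∃ V ∈ 𝓝 ybar, Lambda f c g xbar ∩ V = {ybar}) ∧
      (Convex ℝ (Lambda f c g xbar) → Lambda f c g xbar = {ybar}) :=
  statement10_general f c g hf hc xbar ybar hybar hcq

end Paper
end
end
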